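/- Let T be a deterministic single-tape Turing machine and w an input word. Then for every m ∈ ℕ, every cell r ∈ ℕ_{>0}, and every τ ∈ Γ, the following identity holds as integers: [ξ₀(r) = τ] + #{k : 0 ≤ k < m, η_k = r, ξ_k(r) ≠ τ, ξ_{k+1}(r) = τ} − #{k : 0 ≤ k < m, η_k = r, ξ_k(r) = τ, ξ_{k+1}(r) ≠ τ} = [ξ_m(r) = τ]. In particular, ξ_m(r) = τ if and only if this balance equals 1. -/
import Mathlib


/-- A head movement direction of a Turing machine: left, right, or stay. -/
inductive Dir : Type
  | L : Dir
  | R : Dir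
  | S : Dir

/-- A deterministic single-tape Turing machine with state type `Q` and tape alphabet `Γ`:
a blank symbol, an initial state, a set of halting states (as a Boolean predicate), and a
transition function giving the new state, the symbol written, and the head movement.
(The value of `trans` on halting states is irrelevant: it is never used.) -/
structure TM (Q Γ : Type*) where
  blank : Γ
  start : Q
  halt : Q → Bool
  trans : Q → Γ → Q × Γ × Dir

/-- A configuration of a single-tape Turing machine: current state, head position in
`ℕ` (only positions `≥ 1` are used; the tape is one-sided), and tape contents. -/
structure Cfg (Q Γ : Type*) where
  q : Q
  head : ℕ
  tape : ℕ → Γ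

variable {Q Γ : Type*}

/-- One step of the Turing machine: if the state is halting the configuration is
unchanged; otherwise apply the transition function, write the new symbol at the head,
and move the head (clamped at cell `1` on a left move). -/
def TM.step (T : TM Q Γ) (c : Cfg Q Γ) : Cfg Q Γ :=
  if T.halt c.q then c
  else
    let t := T.trans c.q (c.tape c.head)
    { q := t.1
      head :=
        match t.2.2 with
        | Dir.L => max (c.head - 1) 1
        | Dir.R => c.head + 1
        | Dir.S => c.head
      tape := Function.update c.tape c.head t.2.1 }

/-- The initial configuration on input `w`: initial state, head at cell `1`, and the tape
containing `w` in cells `1, …, |w|` and blanks elsewhere. -/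
def TM.initCfg (T : TM Q Γ) (w : List Γ) : Cfg Q Γ where
  q := T.start
  head := 1
  tape := fun r => if h : 1 ≤ r ∧ r ≤ w.length then w.get ⟨r - 1, by omega⟩ else T.blank

/-- The configuration of `T` on input `w` after `m` steps. -/
def TM.run (T : TM Q Γ) (w : List Γ) (m : ℕ) : Cfg Q Γ :=
  T.step^[m] (T.initCfg w)

/-- **The value-change balance recovers the current tape symbol.**
For the run of `T` on `w`, for every step count `m`, cell `r ≥ 1`, and symbol `τ`:
the indicator of "cell `r` initially holds `τ`", plus the number of steps `k < m` at which
the head is at `r` and the cell changes into `τ`, minus the number of steps `k < m` at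
which the head is at `r` and the cell changes out of `τ`, equals the indicator of
"cell `r` holds `τ` after `m` steps".  In particular, `ξ_m(r) = τ` iff this balance is `1`. -/
theorem TM.valueChange_balance [Fintype Q] [Fintype Γ] [DecidableEq Γ]
    (T : TM Q Γ) (w : List Γ) (m : ℕ) (r : ℕ) (hr : 1 ≤ r) (τ : Γ) :
    ((if (T.run w 0).tape r = τ then (1 : ℤ) else 0)
        + (((Finset.range m).filter (fun k => (T.run w k).head = r ∧
            (T.run w k).tape r ≠ τ ∧ (T.run w (k + 1)).tape r = τ)).card : ℤ)
        - (((Finset.range m).filter (fun k => (T.run w k).head = r ∧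
            (T.run w k).tape r = τ ∧ (T.run w (k + 1)).tape r ≠ τ)).card : ℤ)
      = (if (T.run w m).tape r = τ then (1 : ℤ) else 0)) ∧
    ((T.run w m).tape r = τ ↔
      (if (T.run w 0).tape r = τ then (1 : ℤ) else 0)
        + (((Finset.range m).filter (fun k => (T.run w k).head = r ∧
            (T.run w k).tape r ≠ τ ∧ (T.run w (k + 1)).tape r = τ)).card : ℤ)
        - (((Finset.range m).filter (fun k => (T.run w k).head = r ∧
            (T.run w k).tape r = τ ∧ (T.run w (k + 1)).tape r ≠ τ)).card : ℤ) = 1) := by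
  have key : ∀ n : ℕ,
      ((if (T.run w 0).tape r = τ then (1 : ℤ) else 0)
        + (((Finset.range n).filter (fun k => (T.run w k).head = r ∧
            (T.run w k).tape r ≠ τ ∧ (T.run w (k + 1)).tape r = τ)).card : ℤ)
        - (((Finset.range n).filter (fun k => (T.run w k).head = r ∧
            (T.run w k).tape r = τ ∧ (T.run w (k + 1)).tape r ≠ τ)).card : ℤ)
      = (if (T.run w n).tape r = τ then (1 : ℤ) else 0)) := by
    intro n
    induction n with
    | zero => simp
    | succ n ih =>
      have hrun : T.run w (n + 1) = T.step (T.run w n) := by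
        simp [TM.run, Function.iterate_succ_apply']
      have htape : (T.run w n).head ≠ r →
          (T.run w (n + 1)).tape r = (T.run w n).tape r := by
        intro h
        rw [hrun]
        unfold TM.step
        split
        · rfl
        · simp [Function.update_of_ne (Ne.symm h)]
      have hnm : n ∉ Finset.range n := by simp
      rw [Finset.range_add_one, Finset.filter_insert, Finset.filter_insert]
      by_cases hh : (T.run w n).head = r
      · by_cases hA : (T.run w n).tape r = τ
        · by_cases hB : (T.run w (n + 1)).tape r = τ
          · have h1 : ¬((T.run w n).head = r ∧ (T.run w n).tape r ≠ τ ∧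
                (T.run w (n + 1)).tape r = τ) := fun h => h.2.1 hA
            have h2 : ¬((T.run w n).head = r ∧ (T.run w n).tape r = τ ∧
                (T.run w (n + 1)).tape r ≠ τ) := fun h => h.2.2 hB
            rw [if_neg h1, if_neg h2, if_pos hB]
            rw [if_pos hA] at ih; exact ih
          · have h1 : ¬((T.run w n).head = r ∧ (T.run w n).tape r ≠ τ ∧
                (T.run w (n + 1)).tape r = τ) := fun h => hB h.2.2
            have hp : (T.run w n).head = r ∧ (T.run w n).tape r = τ ∧
                (T.run w (n + 1)).tape r ≠ τ := ⟨hh, hA, hB⟩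
            rw [if_neg h1, if_pos hp, Finset.card_insert_of_notMem (by simp),
              if_neg hB]
            rw [if_pos hA] at ih; push_cast; linarith
        · by_cases hB : (T.run w (n + 1)).tape r = τ
          · have h2 : ¬((T.run w n).head = r ∧ (T.run w n).tape r = τ ∧
                (T.run w (n + 1)).tape r ≠ τ) := fun h => hA h.2.1
            have hp : (T.run w n).head = r ∧ (T.run w n).tape r ≠ τ ∧
                (T.run w (n + 1)).tape r = τ := ⟨hh, hA, hB⟩
            rw [if_pos hp, Finset.card_insert_of_notMem (by simp), if_neg h2,
              if_pos hB]
            rw [if_neg hA] at ih; push_cast; linarith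
          · have h1 : ¬((T.run w n).head = r ∧ (T.run w n).tape r ≠ τ ∧
                (T.run w (n + 1)).tape r = τ) := fun h => hB h.2.2
            have h2 : ¬((T.run w n).head = r ∧ (T.run w n).tape r = τ ∧
                (T.run w (n + 1)).tape r ≠ τ) := fun h => hA h.2.1
            rw [if_neg h1, if_neg h2, if_neg hB]
            rw [if_neg hA] at ih; exact ih
      · have h1 : ¬((T.run w n).head = r ∧ (T.run w n).tape r ≠ τ ∧
            (T.run w (n + 1)).tape r = τ) := fun h => hh h.1
        have h2 : ¬((T.run w n).head = r ∧ (T.run w n).tape r = τ ∧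
            (T.run w (n + 1)).tape r ≠ τ) := fun h => hh h.1
        rw [if_neg h1, if_neg h2, htape hh]
        exact ih
  refine ⟨key m, ?_⟩
  rw [key m]
  by_cases h : (T.run w m).tape r = τ <;> simp [h]
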